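/- arXiv:2207.03713 — 3 statements merged into one kernel-verified Lean document; each statement's English description precedes it below -/
import Mathlib

section
/- Let β > 0, α ∈ ℝ, γ ∈ ℂ, and define μ₁ = 2√2β/(4+αβ+|γ|² − √((αβ+|γ|²−4)²+16|γ|²)) and μ₂ = 2√2β/(4+αβ+|γ|² + √((αβ+|γ|²−4)²+16|γ|²)) (whenever the denominators are nonzero). Then: if α > 0, μ₁ ≥ μ₂ > 0; if α < 0, μ₁ < 0 < μ₂. -/
theorem mu_signs (α β : ℝ) (γ : ℂ) (hβ : 0 < β)
    (hden1 : 4 + α * β + ‖γ‖ ^ 2 -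
        Real.sqrt ((α * β + ‖γ‖ ^ 2 - 4) ^ 2 + 16 * ‖γ‖ ^ 2) ≠ 0)
    (hden2 : 4 + α * β + ‖γ‖ ^ 2 +
        Real.sqrt ((α * β + ‖γ‖ ^ 2 - 4) ^ 2 + 16 * ‖γ‖ ^ 2) ≠ 0) :
    let D : ℝ := Real.sqrt ((α * β + ‖γ‖ ^ 2 - 4) ^ 2 + 16 * ‖γ‖ ^ 2)
    let μ₁ : ℝ := 2 * Real.sqrt 2 * β / (4 + α * β + ‖γ‖ ^ 2 - D)
    let μ₂ : ℝ := 2 * Real.sqrt 2 * β / (4 + α * β + ‖γ‖ ^ 2 + D)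
    (0 < α → μ₁ ≥ μ₂ ∧ 0 < μ₂) ∧ (α < 0 → μ₁ < 0 ∧ 0 < μ₂) := by
  intro D μ₁ μ₂
  set b := ‖γ‖ ^ 2 with hb
  have hb0 : 0 ≤ b := sq_nonneg _
  have hDnn : 0 ≤ D := Real.sqrt_nonneg _
  have hD2 : D ^ 2 = (α * β + b - 4) ^ 2 + 16 * b := by
    have : 0 ≤ (α * β + b - 4) ^ 2 + 16 * b := by positivity
    exact Real.sq_sqrt this
  have hDabs : |α * β + b - 4| ≤ D := by
    have h1 : Real.sqrt ((α * β + b - 4) ^ 2) ≤ D := by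
      apply Real.sqrt_le_sqrt; rw [← hb]; nlinarith
    rwa [Real.sqrt_sq_eq_abs] at h1
  have hd2pos : 0 < 4 + α * β + b + D := by
    have := neg_abs_le (α * β + b - 4)
    linarith
  have hprod : (4 + α * β + b - D) * (4 + α * β + b + D) = 16 * (α * β) := by nlinarith
  have hnum : 0 < 2 * Real.sqrt 2 * β := by
    have : 0 < Real.sqrt 2 := Real.sqrt_pos.mpr (by norm_num)
    positivity
  have hμ₂ : 0 < μ₂ := div_pos hnum hd2pos
  constructor
  · intro hα
    have hd1pos : 0 < 4 + α * β + b - D := by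
      by_contra h
      push_neg at h
      nlinarith
    refine ⟨?_, hμ₂⟩
    have hle : 4 + α * β + b - D ≤ 4 + α * β + b + D := by linarith
    exact div_le_div_of_nonneg_left hnum.le hd1pos hle
  · intro hα
    have hd1neg : 4 + α * β + b - D < 0 := by
      rcases lt_trichotomy (4 + α * β + b - D) 0 with h | h | h
      · exact h
      · exact absurd h hden1
      · nlinarith
    exact ⟨div_neg_of_pos_of_neg hnum hd1neg, hμ₂⟩
end

section
/- Let μ ∈ ℝ and Λ ∈ ℂ, and set ζₙ(Λ) = √(n + 1/2 − Λ). Suppose (Cₙ) satisfies (n+1)^{1/2}(n+3/2)^{1/4}C_{n+1} + 2μ(n+1/2)^{1/4}ζₙ(Λ)Cₙ + n^{1/2}(n−1/2)^{1/4}C_{n−1} = 0 for all n ≥ 0. Then for every N ≥ 0, 2μ·Σ_{n=0}^N |Cₙ|²(n+1/2)^{1/2}·Im ζₙ(Λ) = −(N+1)^{1/2}((N+1)² − 1/4)^{1/4}·Im(C_{N+1}·C̄_N). -/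
/-!
Multiplying the recurrence by `(n + 1/2)^{1/4}` turns it into a symmetric three-term (Jacobi)
recurrence `b (n+1) C (n+1) + d n C n + b n C (n-1) = 0` with real off-diagonal coefficients
`b n = n^{1/2} (n² - 1/4)^{1/4}`, `b 0 = 0`. Multiplying by `conj (C n)` and taking imaginary
parts, the off-diagonal terms become
`b (n+1) Im (C (n+1) conj (C n)) - b n Im (C n conj (C (n-1)))`, which telescopes
(discrete Green identity).
-/

open Finset ComplexConjugate

theorem im_mul_conj_of_three_term {a b : ℝ} {d x y z : ℂ} (h : a * x + d * y + b * z = 0) :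
    a * (x * conj y).im + ‖y‖ ^ 2 * d.im + b * (z * conj y).im = 0 := by
  have hy : y * conj y = ((‖y‖ ^ 2 : ℝ) : ℂ) := by simp [Complex.mul_conj']
  have := congrArg Complex.im (congrArg (· * conj y) h)
  simp only [add_mul, zero_mul, mul_assoc, hy, Complex.add_im, Complex.im_ofReal_mul,
    Complex.zero_im] at this
  rw [← this, mul_comm d, Complex.im_ofReal_mul]

theorem im_mul_conj_swap (z w : ℂ) : (w * conj z).im = -(z * conj w).im := by
  rw [← Complex.conj_im, map_mul, Complex.conj_conj, mul_comm]

theorem sum_sq_norm_mul_im_of_symmetric_recurrence (b : ℕ → ℝ) (d C : ℕ → ℂ)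
    (hrec : ∀ n, b (n + 1) * C (n + 1) + d n * C n + b n * C (n - 1) = 0) (hb_zero : b 0 = 0)
    (N : ℕ) :
    ∑ n ∈ range (N + 1), ‖C n‖ ^ 2 * (d n).im = -(b (N + 1) * (C (N + 1) * conj (C N)).im) := by
  induction N with
  | zero =>
    have h := im_mul_conj_of_three_term (hrec 0)
    rw [hb_zero] at h
    rw [zero_add, sum_range_one]
    linarith
  | succ N ih =>
    have h := im_mul_conj_of_three_term (hrec (N + 1))
    rw [Nat.add_sub_cancel, im_mul_conj_swap (C (N + 1)) (C N)] at h
    rw [sum_range_succ, ih]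
    linarith

theorem rpow_quarter_sq {x : ℝ} (hx : 0 ≤ x) : (x ^ ((1 : ℝ) / 4)) ^ 2 = x ^ ((1 : ℝ) / 2) := by
  rw [← Real.rpow_natCast, ← Real.rpow_mul hx]
  norm_num

theorem jacobi_weight_succ (n : ℕ) :
    ((n : ℝ) + 1) ^ ((1 : ℝ) / 2) * ((n : ℝ) + 3 / 2) ^ ((1 : ℝ) / 4) *
        ((n : ℝ) + 1 / 2) ^ ((1 : ℝ) / 4) =
      ((n : ℝ) + 1) ^ ((1 : ℝ) / 2) * (((n : ℝ) + 1) ^ 2 - 1 / 4) ^ ((1 : ℝ) / 4) := by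
  rw [mul_assoc, ← Real.mul_rpow (by positivity) (by positivity)]
  ring_nf

theorem jacobi_weight_pred (n : ℕ) :
    (n : ℝ) ^ ((1 : ℝ) / 2) * ((n : ℝ) - 1 / 2) ^ ((1 : ℝ) / 4) *
        ((n : ℝ) + 1 / 2) ^ ((1 : ℝ) / 4) =
      (n : ℝ) ^ ((1 : ℝ) / 2) * ((n : ℝ) ^ 2 - 1 / 4) ^ ((1 : ℝ) / 4) := by
  rcases Nat.eq_zero_or_pos n with rfl | hn
  · simp
  · have hn : (1 : ℝ) ≤ n := by exact_mod_cast hn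
    rw [mul_assoc, ← Real.mul_rpow (by linarith) (by positivity)]
    ring_nf

theorem jacobi_summation_identity_zeta_general (μ : ℝ) (C : ℕ → ℂ)
    (ζ : ℕ → ℂ)
    (hrec : ∀ n : ℕ,
      ((((n : ℝ) + 1) ^ ((1 : ℝ) / 2) * ((n : ℝ) + 3 / 2) ^ ((1 : ℝ) / 4) : ℝ) : ℂ) * C (n + 1)
        + 2 * (μ : ℂ) * ((((n : ℝ) + 1 / 2) ^ ((1 : ℝ) / 4) : ℝ) : ℂ) * ζ n * C n
        + (((n : ℝ) ^ ((1 : ℝ) / 2) * ((n : ℝ) - 1 / 2) ^ ((1 : ℝ) / 4) : ℝ) : ℂ) * C (n - 1)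
        = 0) :
    ∀ N : ℕ, 2 * μ * ∑ n ∈ Finset.range (N + 1),
        ‖C n‖ ^ 2 * ((n : ℝ) + 1 / 2) ^ ((1 : ℝ) / 2) * (ζ n).im =
      -(((N : ℝ) + 1) ^ ((1 : ℝ) / 2) * (((N : ℝ) + 1) ^ 2 - 1 / 4) ^ ((1 : ℝ) / 4)) *
        (C (N + 1) * (starRingEnd ℂ) (C N)).im := by
  intro N
  let w : ℕ → ℝ := fun n ↦ ((n : ℝ) + 1 / 2) ^ ((1 : ℝ) / 4)
  let b : ℕ → ℝ := fun n ↦ (n : ℝ) ^ ((1 : ℝ) / 2) * ((n : ℝ) ^ 2 - 1 / 4) ^ ((1 : ℝ) / 4)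
  let d : ℕ → ℂ := fun n ↦ ((2 * μ * w n ^ 2 : ℝ) : ℂ) * ζ n
  have hsym : ∀ n, (b (n + 1) : ℂ) * C (n + 1) + d n * C n + b n * C (n - 1) = 0 := by
    intro n
    have hsucc := jacobi_weight_succ n
    have hpred := jacobi_weight_pred n
    simp only [b, d, w, Nat.cast_succ, ← hsucc, ← hpred]
    have h := hrec n
    push_cast at h ⊢
    linear_combination (w n : ℂ) * h
  have hb_zero : b 0 = 0 := by simp [b]
  have key := sum_sq_norm_mul_im_of_symmetric_recurrence b d C hsym hb_zero N
  have hb_succ :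
      b (N + 1) = ((N : ℝ) + 1) ^ ((1 : ℝ) / 2) * (((N : ℝ) + 1) ^ 2 - 1 / 4) ^ ((1 : ℝ) / 4) := by
    simp only [b, Nat.cast_succ]
  rw [neg_mul, ← hb_succ, ← key, mul_sum]
  refine sum_congr rfl fun n _ ↦ ?_
  simp only [d, w, Complex.im_ofReal_mul, rpow_quarter_sq (by positivity : (0 : ℝ) ≤ n + 1 / 2)]
  ring

theorem jacobi_summation_identity_zeta (μ : ℝ) (Λ : ℂ) (C : ℕ → ℂ)
    (ζ : ℕ → ℂ) (hζ : ∀ n : ℕ, ζ n = ((n : ℂ) + 1 / 2 - Λ) ^ ((1 : ℂ) / 2))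
    (hrec : ∀ n : ℕ,
      ((((n : ℝ) + 1) ^ ((1 : ℝ) / 2) * ((n : ℝ) + 3 / 2) ^ ((1 : ℝ) / 4) : ℝ) : ℂ) * C (n + 1)
        + 2 * (μ : ℂ) * ((((n : ℝ) + 1 / 2) ^ ((1 : ℝ) / 4) : ℝ) : ℂ) * ζ n * C n
        + (((n : ℝ) ^ ((1 : ℝ) / 2) * ((n : ℝ) - 1 / 2) ^ ((1 : ℝ) / 4) : ℝ) : ℂ) * C (n - 1)
        = 0) :
    ∀ N : ℕ, 2 * μ * ∑ n ∈ Finset.range (N + 1),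
        ‖C n‖ ^ 2 * ((n : ℝ) + 1 / 2) ^ ((1 : ℝ) / 2) * (ζ n).im =
      -(((N : ℝ) + 1) ^ ((1 : ℝ) / 2) * (((N : ℝ) + 1) ^ 2 - 1 / 4) ^ ((1 : ℝ) / 4)) *
        (C (N + 1) * (starRingEnd ℂ) (C N)).im :=
  jacobi_summation_identity_zeta_general μ C ζ hrec
end

section
/- Suppose μ ∈ ℝ, Λ = i, ζₙ(i) has Im ζₙ(i) < 0 for all n, μ > 0, and the sequence (Cₙ) satisfies the Jacobi recurrence (n+1)^{1/2}(n+3/2)^{1/4}C_{n+1} + 2μ(n+1/2)^{1/4}ζₙ(i)Cₙ + n^{1/2}(n−1/2)^{1/4}C_{n−1} = 0 together with (N+1)^{1/2}((N+1)²−1/4)^{1/4}·Im(C_{N+1}C̄_N) → 0 as N → ∞. Then Cₙ = 0 for all n. -/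
open Finset

theorem jacobi_trivial_solution (μ : ℝ) (hμ : 0 < μ) (C : ℕ → ℂ)
    (ζ : ℕ → ℂ) (hζ : ∀ n : ℕ, ζ n = ((n : ℂ) + 1 / 2 - Complex.I) ^ ((1 : ℂ) / 2))
    (him : ∀ n : ℕ, (ζ n).im < 0)
    (hrec : ∀ n : ℕ,
      ((((n : ℝ) + 1) ^ ((1 : ℝ) / 2) * ((n : ℝ) + 3 / 2) ^ ((1 : ℝ) / 4) : ℝ) : ℂ) * C (n + 1)
        + 2 * (μ : ℂ) * ((((n : ℝ) + 1 / 2) ^ ((1 : ℝ) / 4) : ℝ) : ℂ) * ζ n * C n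
        + (((n : ℝ) ^ ((1 : ℝ) / 2) * ((n : ℝ) - 1 / 2) ^ ((1 : ℝ) / 4) : ℝ) : ℂ) * C (n - 1)
        = 0)
    (hlim : Filter.Tendsto (fun N : ℕ =>
        ((N : ℝ) + 1) ^ ((1 : ℝ) / 2) * (((N : ℝ) + 1) ^ 2 - 1 / 4) ^ ((1 : ℝ) / 4) *
          (C (N + 1) * (starRingEnd ℂ) (C N)).im) Filter.atTop (nhds 0)) :
    ∀ n : ℕ, C n = 0 := by
  set D : ℕ → ℝ := fun N =>
    ((N : ℝ) + 1) ^ ((1 : ℝ) / 2) * (((N : ℝ) + 1) ^ 2 - 1 / 4) ^ ((1 : ℝ) / 4) *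
      (C (N + 1) * (starRingEnd ℂ) (C N)).im with hDdef
  set t : ℕ → ℝ := fun n =>
    -(2 * μ) * ((n : ℝ) + 1 / 2) ^ ((1 : ℝ) / 2) * (ζ n).im * Complex.normSq (C n) with htdef
  -- imaginary part identity from the recurrence
  have himeq : ∀ m : ℕ,
      ((m : ℝ) + 1) ^ ((1 : ℝ) / 2) * ((m : ℝ) + 3 / 2) ^ ((1 : ℝ) / 4) *
          (C (m + 1) * (starRingEnd ℂ) (C m)).im
        + 2 * μ * ((m : ℝ) + 1 / 2) ^ ((1 : ℝ) / 4) * (ζ m).im * Complex.normSq (C m)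
        + (m : ℝ) ^ ((1 : ℝ) / 2) * ((m : ℝ) - 1 / 2) ^ ((1 : ℝ) / 4) *
          (C (m - 1) * (starRingEnd ℂ) (C m)).im = 0 := by
    intro m
    have h2 : ((((m : ℝ) + 1) ^ ((1 : ℝ) / 2) * ((m : ℝ) + 3 / 2) ^ ((1 : ℝ) / 4) : ℝ) : ℂ) * C (m + 1)
        + 2 * (μ : ℂ) * ((((m : ℝ) + 1 / 2) ^ ((1 : ℝ) / 4) : ℝ) : ℂ) * ζ m * C m
        + (((m : ℝ) ^ ((1 : ℝ) / 2) * ((m : ℝ) - 1 / 2) ^ ((1 : ℝ) / 4) : ℝ) : ℂ) * C (m - 1) = 0 :=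
      hrec m
    have h3 := congrArg (fun z => (z * (starRingEnd ℂ) (C m)).im) h2
    simp only [add_mul, zero_mul, Complex.add_im, Complex.zero_im, Complex.mul_im,
      Complex.mul_re, Complex.ofReal_re, Complex.ofReal_im, Complex.conj_re, Complex.conj_im,
      Complex.normSq_apply, Complex.re_ofNat, Complex.im_ofNat] at h3 ⊢
    linear_combination h3
  have himneg : ∀ z w : ℂ, (z * (starRingEnd ℂ) w).im = -((w * (starRingEnd ℂ) z).im) := by
    intro z w
    simp [Complex.mul_im]
    ring
  -- base case
  have key0 : D 0 = t 0 := by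
    have h := himeq 0
    have hz : ((0 : ℕ) : ℝ) ^ ((1 : ℝ) / 2) = 0 := by
      norm_num
    norm_num [hz] at h
    have e1 : ((1 : ℝ) / 2) ^ ((1 : ℝ) / 4) * ((3 : ℝ) / 2) ^ ((1 : ℝ) / 4)
        = ((3 : ℝ) / 4) ^ ((1 : ℝ) / 4) := by
      rw [← Real.mul_rpow (by norm_num) (by norm_num)]
      norm_num
    have e3 : ((1 : ℝ) / 2) ^ ((1 : ℝ) / 4) * ((1 : ℝ) / 2) ^ ((1 : ℝ) / 4)
        = ((1 : ℝ) / 2) ^ ((1 : ℝ) / 2) := by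
      rw [← Real.rpow_add (by norm_num)]
      norm_num
    simp only [hDdef, htdef]
    norm_num
    linear_combination ((1 : ℝ) / 2) ^ ((1 : ℝ) / 4) * h
      - ((C 1).im * (C 0).re - (C 1).re * (C 0).im) * e1
      - 2 * μ * (ζ 0).im * Complex.normSq (C 0) * e3
  -- inductive step
  have keyS : ∀ n : ℕ, D (n + 1) = D n + t (n + 1) := by
    intro n
    have h := himeq (n + 1)
    set x : ℝ := (n : ℝ) + 1 with hx
    have hx1 : (1 : ℝ) ≤ x := by simp [hx]
    have hcast : ((n + 1 : ℕ) : ℝ) = x := by push_cast [hx]; ring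
    rw [hcast] at h
    have hsub : (n + 1) - 1 = n := rfl
    rw [hsub] at h
    have e1 : (x + 1 / 2) ^ ((1 : ℝ) / 4) * (x + 3 / 2) ^ ((1 : ℝ) / 4)
        = ((x + 1) ^ 2 - 1 / 4) ^ ((1 : ℝ) / 4) := by
      rw [← Real.mul_rpow (by linarith) (by linarith)]
      congr 1
      ring
    have e2 : (x - 1 / 2) ^ ((1 : ℝ) / 4) * (x + 1 / 2) ^ ((1 : ℝ) / 4)
        = (x ^ 2 - 1 / 4) ^ ((1 : ℝ) / 4) := by
      rw [← Real.mul_rpow (by linarith) (by linarith)]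
      congr 1
      ring
    have e3 : (x + 1 / 2) ^ ((1 : ℝ) / 4) * (x + 1 / 2) ^ ((1 : ℝ) / 4)
        = (x + 1 / 2) ^ ((1 : ℝ) / 2) := by
      rw [← Real.rpow_add (by linarith)]
      norm_num
    have hswap : (C n * (starRingEnd ℂ) (C (n + 1))).im
        = -((C (n + 1) * (starRingEnd ℂ) (C n)).im) := himneg _ _
    simp only [hDdef, htdef]
    push_cast
    rw [← hx]
    linear_combination (x + 1 / 2) ^ ((1 : ℝ) / 4) * h
      - (x + 1) ^ ((1 : ℝ) / 2) * (C (n + 1 + 1) * (starRingEnd ℂ) (C (n + 1))).im * e1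
      - x ^ ((1 : ℝ) / 2) * (C n * (starRingEnd ℂ) (C (n + 1))).im * e2
      - 2 * μ * (ζ (n + 1)).im * Complex.normSq (C (n + 1)) * e3
      - x ^ ((1 : ℝ) / 2) * (x ^ 2 - 1 / 4) ^ ((1 : ℝ) / 4) * hswap
  -- partial sums
  have hDS : ∀ N : ℕ, D N = ∑ n ∈ range (N + 1), t n := by
    intro N
    induction N with
    | zero => simpa using key0
    | succ k ih => rw [sum_range_succ, ← ih, keyS k]
  have ht_nonneg : ∀ n : ℕ, 0 ≤ t n := by
    intro n
    have h1 : (0 : ℝ) < ((n : ℝ) + 1 / 2) ^ ((1 : ℝ) / 2) := Real.rpow_pos_of_pos (by positivity) _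
    have h2 := him n
    have h3 : (0 : ℝ) ≤ Complex.normSq (C n) := Complex.normSq_nonneg _
    have hpos : 0 < 2 * μ * (((n : ℝ) + 1 / 2) ^ ((1 : ℝ) / 2)) * (-(ζ n).im) :=
      mul_pos (mul_pos (by linarith) h1) (by linarith)
    simp only [htdef]
    nlinarith [mul_nonneg hpos.le h3]
  have hmono : Monotone fun N => ∑ n ∈ range (N + 1), t n := by
    apply monotone_nat_of_le_succ
    intro k
    exact sum_le_sum_of_subset_of_nonneg (by simp [range_subset]; omega) fun i _ _ => ht_nonneg i
  have hlim' : Filter.Tendsto (fun N => ∑ n ∈ range (N + 1), t n) Filter.atTop (nhds 0) := by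
    have : (fun N => ∑ n ∈ range (N + 1), t n) = D := by
      funext N
      exact (hDS N).symm
    rw [this]
    exact hlim
  have hSle : ∀ N : ℕ, ∑ n ∈ range (N + 1), t n ≤ 0 := fun N => hmono.ge_of_tendsto hlim' N
  have ht_zero : ∀ n : ℕ, t n = 0 := by
    intro n
    have h1 : t n ≤ ∑ m ∈ range (n + 1), t m :=
      single_le_sum (fun i _ => ht_nonneg i) (self_mem_range_succ n)
    have h2 := hSle n
    have h3 := ht_nonneg n
    linarith
  intro n
  have h := ht_zero n
  simp only [htdef] at h
  have h1 : (0 : ℝ) < ((n : ℝ) + 1 / 2) ^ ((1 : ℝ) / 2) := Real.rpow_pos_of_pos (by positivity) _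
  have h2 := him n
  have h3 : Complex.normSq (C n) = 0 := by
    have hc : -(2 * μ) * ((n : ℝ) + 1 / 2) ^ ((1 : ℝ) / 2) * (ζ n).im > 0 := by nlinarith [mul_pos (mul_pos hμ h1) (neg_pos.mpr h2)]
    by_contra hne
    have h4 : 0 < Complex.normSq (C n) := lt_of_le_of_ne (Complex.normSq_nonneg _) (Ne.symm hne)
    nlinarith [mul_pos hc h4]
  exact Complex.normSq_eq_zero.mp h3
end
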